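/- Let f be a discrete Morse-Bott function on a finite abstract simplicial complex K and for ε > 0 define f_ε(σ) = f(σ) − ε/(dim σ + 1). Then there exists ε₀ > 0 such that for all 0 < ε < ε₀, f_ε is a discrete Morse function on K in Forman's sense. -/

import Mathlib

open Finset

noncomputable section
open scoped Classical

/-- `σ` is a facet of `τ`: `σ ⊆ τ` and `dim σ = dim τ − 1`. -/
def Facet (σ τ : Finset ℕ) : Prop := σ ⊆ τ ∧ σ.card + 1 = τ.card

/-- A finite abstract simplicial complex: a finite family of nonempty finite sets
closed under taking nonempty subsets. -/
def IsComplex (K : Finset (Finset ℕ)) : Prop :=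
  (∀ σ ∈ K, σ.Nonempty) ∧ ∀ σ ∈ K, ∀ ν, ν ⊆ σ → ν.Nonempty → ν ∈ K

/-- The closure of a set of cells: all nonempty subsets of its cells. -/
def closureOf (S : Finset (Finset ℕ)) : Finset (Finset ℕ) :=
  S.biUnion fun σ => σ.powerset.filter fun ν => ν ≠ ∅

/-- The graph on `C` joining two cells whenever their closures intersect is connected. -/
def ConnectedOn (C : Finset (Finset ℕ)) : Prop :=
  ∀ a ∈ C, ∀ b ∈ C,
    Relation.ReflTransGen
      (fun x y => x ∈ C ∧ y ∈ C ∧ (closureOf {x} ∩ closureOf {y}).Nonempty) a b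

/-- A nonempty set of cells of `K`, all with the same `f`-value, whose
closure-intersection graph is connected. -/
def IsPreCollection (K : Finset (Finset ℕ)) (f : Finset ℕ → ℝ) (C : Finset (Finset ℕ)) :
    Prop :=
  C ⊆ K ∧ C.Nonempty ∧ (∀ σ ∈ C, ∀ τ ∈ C, f σ = f τ) ∧ ConnectedOn C

/-- A collection for `f`: a maximal constant-value connected set of cells. -/
def IsCollection (K : Finset (Finset ℕ)) (f : Finset ℕ → ℝ) (C : Finset (Finset ℕ)) :
    Prop :=
  IsPreCollection K f C ∧ ∀ C', IsPreCollection K f C' → C ⊆ C' → C' = C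

/-- `#{τ ∉ C : σ < τ, f(τ) < f(σ)}`. -/
def UpCount (K : Finset (Finset ℕ)) (f : Finset ℕ → ℝ) (C : Finset (Finset ℕ))
    (σ : Finset ℕ) : ℕ :=
  (K.filter fun τ => τ ∉ C ∧ Facet σ τ ∧ f τ < f σ).card

/-- `#{ν ∉ C : ν < σ, f(ν) > f(σ)}`. -/
def DownCount (K : Finset (Finset ℕ)) (f : Finset ℕ → ℝ) (C : Finset (Finset ℕ))
    (σ : Finset ℕ) : ℕ :=
  (K.filter fun ν => ν ∉ C ∧ Facet ν σ ∧ f σ < f ν).card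

/-- A discrete Morse-Bott function on `K`. -/
def IsMorseBott (K : Finset (Finset ℕ)) (f : Finset ℕ → ℝ) : Prop :=
  ∀ C, IsCollection K f C → ∀ σ ∈ C, UpCount K f C σ ≤ 1 ∧ DownCount K f C σ ≤ 1

/-- `σ` is upward noncritical w.r.t. `C`. -/
def UpNoncrit (K : Finset (Finset ℕ)) (f : Finset ℕ → ℝ) (C : Finset (Finset ℕ))
    (σ : Finset ℕ) : Prop :=
  ∃ w ∈ K, w ∉ C ∧ Facet σ w ∧ f w < f σ

/-- `σ` is downward noncritical w.r.t. `C`. -/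
def DownNoncrit (K : Finset (Finset ℕ)) (f : Finset ℕ → ℝ) (C : Finset (Finset ℕ))
    (σ : Finset ℕ) : Prop :=
  ∃ w ∈ K, w ∉ C ∧ Facet w σ ∧ f σ < f w

/-- The reduced collection `C^red`: the cells of `C` that are neither upward nor
downward noncritical w.r.t. `C`. -/
def reducedOf (K : Finset (Finset ℕ)) (f : Finset ℕ → ℝ) (C : Finset (Finset ℕ)) :
    Finset (Finset ℕ) :=
  C.filter fun σ => ¬ UpNoncrit K f C σ ∧ ¬ DownNoncrit K f C σ

/-- A noncritical pair: a two-element set `{σ, τ}` with `σ < τ` and `f σ ≥ f τ`. -/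
def IsNoncritPair (f : Finset ℕ → ℝ) (S : Finset (Finset ℕ)) : Prop :=
  ∃ σ τ, Facet σ τ ∧ f τ ≤ f σ ∧ S = {σ, τ}

/-- A discrete Morse function in Forman's sense. -/
def IsDiscreteMorse (K : Finset (Finset ℕ)) (g : Finset ℕ → ℝ) : Prop :=
  ∀ σ ∈ K, (K.filter fun τ => Facet σ τ ∧ g τ ≤ g σ).card ≤ 1 ∧
    (K.filter fun ν => Facet ν σ ∧ g σ ≤ g ν).card ≤ 1

/-- A critical cell of `g`. -/
def IsCritical (K : Finset (Finset ℕ)) (g : Finset ℕ → ℝ) (σ : Finset ℕ) : Prop :=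
  σ ∈ K ∧ (K.filter fun τ => Facet σ τ ∧ g τ ≤ g σ).card = 0 ∧
    (K.filter fun ν => Facet ν σ ∧ g σ ≤ g ν).card = 0

/-
The perturbation `ε / (dim σ + 1)` decreases strictly with the dimension, and the drop along a
facet `σ < τ` is `ε / (|σ| (|σ| + 1)) < ε`. Once `ε` is below every positive jump `f σ - f τ`
along facets, `f_ε τ ≤ f_ε σ` therefore holds exactly when `f τ < f σ`. Such a `τ` has a
different `f`-value, so it lies outside the collection of `σ` and is counted by the Morse-Bott
condition; the downward count is symmetric.
-/

lemma isPreCollection_singleton {K : Finset (Finset ℕ)} (f : Finset ℕ → ℝ) {σ : Finset ℕ}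
    (hσ : σ ∈ K) : IsPreCollection K f {σ} := by
  refine ⟨singleton_subset_iff.2 hσ, singleton_nonempty σ, ?_, ?_⟩
  · intro a ha b hb
    rw [mem_singleton.1 ha, mem_singleton.1 hb]
  · intro a ha b hb
    rw [mem_singleton.1 ha, mem_singleton.1 hb]

lemma exists_isCollection_mem {K : Finset (Finset ℕ)} (f : Finset ℕ → ℝ) {σ : Finset ℕ}
    (hσ : σ ∈ K) : ∃ C, IsCollection K f C ∧ σ ∈ C := by
  set S := K.powerset.filter fun C => IsPreCollection K f C ∧ σ ∈ C
  have hσS : {σ} ∈ S :=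
    mem_filter.2 ⟨mem_powerset.2 (singleton_subset_iff.2 hσ),
      isPreCollection_singleton f hσ, mem_singleton_self σ⟩
  obtain ⟨C, hCS, hmax⟩ := S.exists_max_image card ⟨_, hσS⟩
  obtain ⟨-, hC, hσC⟩ := mem_filter.1 hCS
  refine ⟨C, ⟨hC, fun C' hC' hCC' => ?_⟩, hσC⟩
  have hC'S : C' ∈ S := mem_filter.2 ⟨mem_powerset.2 hC'.1, hC', hCC' hσC⟩
  exact (eq_of_subset_of_card_le hCC' (hmax C' hC'S)).symm

lemma Finset.exists_pos_le_of_pos {α : Type*} (s : Finset α) (d : α → ℝ) :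
    ∃ ε₀ > (0 : ℝ), ∀ x ∈ s, 0 < d x → ε₀ ≤ d x := by
  by_cases h : (s.filter fun x => 0 < d x).Nonempty
  · obtain ⟨x, hx, hmin⟩ := (s.filter fun x => 0 < d x).exists_min_image d h
    exact ⟨d x, (mem_filter.1 hx).2, fun y hy hdy => hmin y (mem_filter.2 ⟨hy, hdy⟩)⟩
  · exact ⟨1, one_pos, fun y hy hdy => absurd ⟨y, mem_filter.2 ⟨hy, hdy⟩⟩ h⟩

lemma exists_pos_le_facet_jump (K : Finset (Finset ℕ)) (f : Finset ℕ → ℝ) :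
    ∃ ε₀ > (0 : ℝ), ∀ σ ∈ K, ∀ τ ∈ K, Facet σ τ → f τ < f σ → ε₀ ≤ f σ - f τ := by
  obtain ⟨ε₀, hε₀, hle⟩ :=
    ((K ×ˢ K).filter fun p => Facet p.1 p.2).exists_pos_le_of_pos fun p => f p.1 - f p.2
  exact ⟨ε₀, hε₀, fun σ hσ τ hτ hστ hlt =>
    hle (σ, τ) (mem_filter.2 ⟨mem_product.2 ⟨hσ, hτ⟩, hστ⟩) (sub_pos.2 hlt)⟩

/-- `f_ε`; the natural-number expression `(|σ| - 1) + 1` is `dim σ + 1`, and equals `|σ|`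
only for nonempty `σ` (it is `1` at `σ = ∅`). -/
def perturb (f : Finset ℕ → ℝ) (ε : ℝ) (σ : Finset ℕ) : ℝ :=
  f σ - ε / (((σ.card - 1) + 1 : ℕ) : ℝ)

lemma perturb_of_nonempty (f : Finset ℕ → ℝ) (ε : ℝ) {σ : Finset ℕ} (hσ : σ.Nonempty) :
    perturb f ε σ = f σ - ε / σ.card := by
  rw [perturb, Nat.sub_add_cancel (card_pos.2 hσ)]

lemma perturb_le_perturb_iff {f : Finset ℕ → ℝ} {ε : ℝ} {σ τ : Finset ℕ} (hσ : σ.Nonempty)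
    (hστ : Facet σ τ) (hε : 0 < ε) (hjump : f τ < f σ → ε < f σ - f τ) :
    perturb f ε τ ≤ perturb f ε σ ↔ f τ < f σ := by
  have hτ : τ.Nonempty := hσ.mono hστ.1
  rw [perturb_of_nonempty f ε hσ, perturb_of_nonempty f ε hτ, ← hστ.2]
  have ha : (1 : ℝ) ≤ σ.card := by exact_mod_cast card_pos.2 hσ
  push_cast
  have hdrop_pos : ε / (σ.card + 1) < ε / σ.card :=
    div_lt_div_of_pos_left hε (by linarith) (by linarith)
  have hdrop_le : ε / σ.card - ε / (σ.card + 1) < ε := by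
    have : 0 < ε / (σ.card + 1) := div_pos hε (by linarith)
    linarith [div_le_self hε.le ha]
  constructor
  · intro h
    linarith
  · intro h
    linarith [hjump h]

section Perturbation

variable {K : Finset (Finset ℕ)} {f : Finset ℕ → ℝ} {ε : ℝ} {C : Finset (Finset ℕ)}
  {σ : Finset ℕ}

lemma filter_perturb_up_subset (hK : ∀ σ ∈ K, σ.Nonempty) (hε : 0 < ε)
    (hjump : ∀ σ ∈ K, ∀ τ ∈ K, Facet σ τ → f τ < f σ → ε < f σ - f τ)
    (hC : ∀ τ ∈ C, f τ = f σ) (hσ : σ ∈ K) :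
    (K.filter fun τ => Facet σ τ ∧ perturb f ε τ ≤ perturb f ε σ) ⊆
      K.filter fun τ => τ ∉ C ∧ Facet σ τ ∧ f τ < f σ := by
  intro τ hτ
  obtain ⟨hτK, hστ, hle⟩ := mem_filter.1 hτ
  have hlt := (perturb_le_perturb_iff (hK σ hσ) hστ hε (hjump σ hσ τ hτK hστ)).1 hle
  exact mem_filter.2 ⟨hτK, fun hτC => hlt.ne (hC τ hτC), hστ, hlt⟩

lemma filter_perturb_down_subset (hK : ∀ σ ∈ K, σ.Nonempty) (hε : 0 < ε)
    (hjump : ∀ σ ∈ K, ∀ τ ∈ K, Facet σ τ → f τ < f σ → ε < f σ - f τ)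
    (hC : ∀ ν ∈ C, f ν = f σ) (hσ : σ ∈ K) :
    (K.filter fun ν => Facet ν σ ∧ perturb f ε σ ≤ perturb f ε ν) ⊆
      K.filter fun ν => ν ∉ C ∧ Facet ν σ ∧ f σ < f ν := by
  intro ν hν
  obtain ⟨hνK, hνσ, hle⟩ := mem_filter.1 hν
  have hlt := (perturb_le_perturb_iff (hK ν hνK) hνσ hε (hjump ν hνK σ hσ hνσ)).1 hle
  exact mem_filter.2 ⟨hνK, fun hνC => hlt.ne' (hC ν hνC), hνσ, hlt⟩

lemma isDiscreteMorse_perturb (hK : ∀ σ ∈ K, σ.Nonempty) (hf : IsMorseBott K f) (hε : 0 < ε)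
    (hjump : ∀ σ ∈ K, ∀ τ ∈ K, Facet σ τ → f τ < f σ → ε < f σ - f τ) :
    IsDiscreteMorse K (perturb f ε) := by
  intro σ hσ
  obtain ⟨C, hC, hσC⟩ := exists_isCollection_mem f hσ
  have hCσ : ∀ τ ∈ C, f τ = f σ := fun τ hτ => hC.1.2.2.1 τ hτ σ hσC
  obtain ⟨hup, hdown⟩ := hf C hC σ hσC
  exact ⟨(card_le_card (filter_perturb_up_subset hK hε hjump hCσ hσ)).trans hup,
    (card_le_card (filter_perturb_down_subset hK hε hjump hCσ hσ)).trans hdown⟩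

end Perturbation

/-- For a discrete Morse-Bott function `f` and
`f_ε(σ) = f(σ) − ε/(dim σ + 1)`, there is `ε₀ > 0` such that `f_ε` is a discrete Morse
function in Forman's sense for all `0 < ε < ε₀`. -/
theorem statement11 (K : Finset (Finset ℕ)) (hK : IsComplex K) (f : Finset ℕ → ℝ)
    (hf : IsMorseBott K f) :
    ∃ ε₀ > (0 : ℝ), ∀ ε : ℝ, 0 < ε → ε < ε₀ →
      IsDiscreteMorse K (fun σ => f σ - ε / (((σ.card - 1) + 1 : ℕ) : ℝ)) := by
  obtain ⟨ε₀, hε₀, hjump⟩ := exists_pos_le_facet_jump K f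
  exact ⟨ε₀, hε₀, fun ε hε hεε₀ => isDiscreteMorse_perturb hK.1 hf hε
    fun σ hσ τ hτ hστ hlt => hεε₀.trans_le (hjump σ hσ τ hτ hστ hlt)⟩
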